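/- Let P, Q be nonempty subsets of Y with Q − K closed. Then the following are equivalent: (i) P ⊆ Q − K; (ii) there exists e ∈ K \ {0} such that sup_{p∈P} inf_{q∈Q} z^{e,K}(p − q) ≤ 0; (iii) for all e ∈ K \ {0}, sup_{p∈P} inf_{q∈Q} z^{e,K}(p − q) ≤ 0. -/

import Mathlib

/-! If `P ⊆ Q - K`, every `p ∈ P` is `q - k`, so `0 • e - (p - q) ∈ K` and `z^{e,K}(p - q) ≤ 0`.
Conversely, `ℤ₂^{e,K}(P,Q) ≤ 0` gives, for each `p ∈ P` and `ε > 0`, some `q ∈ Q` with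
`z^{e,K}(p - q) < ε`; as `K` is a convex cone containing `e`, this means `p - ε • e ∈ Q - K`.
Letting `ε → 0⁺` and using that `Q - K` is closed gives `p ∈ Q - K`. -/

open Set Pointwise

/-- Gerstewitz scalarization function. -/
noncomputable def zG {Y : Type*} [AddCommGroup Y] [Module ℝ Y] (e : Y) (K : Set Y) (y : Y) :
    EReal :=
  sInf ((fun t : ℝ => (t : EReal)) '' {t : ℝ | t • e - y ∈ K})

/-- ℤ₂^{e,K}(P,Q) = sup_{p∈P} inf_{q∈Q} z^{e,K}(p − q). -/
noncomputable def Ztwo {Y : Type*} [AddCommGroup Y] [Module ℝ Y] (e : Y) (K : Set Y)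
    (P Q : Set Y) : EReal :=
  ⨆ p ∈ P, ⨅ q ∈ Q, zG e K (p - q)

open Filter Topology

section

variable {Y : Type*} [AddCommGroup Y] [Module ℝ Y] {K : Set Y}

lemma add_mem_of_convex_of_smul_mem (hKconv : Convex ℝ K)
    (hKcone : ∀ c : ℝ, 0 ≤ c → ∀ x ∈ K, c • x ∈ K) {a b : Y} (ha : a ∈ K) (hb : b ∈ K) :
    a + b ∈ K := by
  have hmid : (1 / 2 : ℝ) • a + (1 / 2 : ℝ) • b ∈ K :=
    hKconv ha hb (by norm_num) (by norm_num) (by norm_num)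
  have hdouble : (2 : ℝ) • ((1 / 2 : ℝ) • a + (1 / 2 : ℝ) • b) = a + b := by
    rw [smul_add, smul_smul, smul_smul]
    norm_num
  simpa only [hdouble] using hKcone 2 (by norm_num) _ hmid

lemma zG_le_of_smul_sub_mem {e y : Y} {t : ℝ} (h : t • e - y ∈ K) : zG e K y ≤ t :=
  sInf_le ⟨t, h, rfl⟩

lemma smul_sub_mem_of_zG_lt (hKconv : Convex ℝ K)
    (hKcone : ∀ c : ℝ, 0 ≤ c → ∀ x ∈ K, c • x ∈ K) {e y : Y} (he : e ∈ K) {t : ℝ}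
    (h : zG e K y < t) : t • e - y ∈ K := by
  obtain ⟨_, ⟨s, hs, rfl⟩, hst⟩ := sInf_lt_iff.mp h
  have hgap : (t - s) • e ∈ K := hKcone _ (sub_nonneg.mpr (EReal.coe_lt_coe_iff.mp hst).le) e he
  have hsum : s • e - y + (t - s) • e = t • e - y := by
    rw [sub_smul]
    abel
  simpa only [hsum] using add_mem_of_convex_of_smul_mem hKconv hKcone hs hgap

lemma Ztwo_nonpos_of_subset_sub {e : Y} {P Q : Set Y} (hsub : P ⊆ Q - K) : Ztwo e K P Q ≤ 0 := by
  refine iSup₂_le fun p hp => ?_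
  obtain ⟨q, hq, k, hk, rfl⟩ := hsub hp
  refine (iInf₂_le q hq).trans ?_
  have hzG : zG e K (q - k - q) ≤ ((0 : ℝ) : EReal) := zG_le_of_smul_sub_mem (by simpa using hk)
  simpa using hzG

lemma sub_smul_mem_sub_of_Ztwo_nonpos (hKconv : Convex ℝ K)
    (hKcone : ∀ c : ℝ, 0 ≤ c → ∀ x ∈ K, c • x ∈ K) {e : Y} (he : e ∈ K) {P Q : Set Y}
    (hZ : Ztwo e K P Q ≤ 0) {p : Y} (hp : p ∈ P) {ε : ℝ} (hε : 0 < ε) :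
    p - ε • e ∈ Q - K := by
  have hlt : ⨅ q ∈ Q, zG e K (p - q) < ε :=
    (iSup₂_le_iff.mp hZ p hp).trans_lt (EReal.coe_pos.mpr hε)
  obtain ⟨q, hlt⟩ := iInf_lt_iff.mp hlt
  obtain ⟨hq, hlt⟩ := iInf_lt_iff.mp hlt
  exact ⟨q, hq, ε • e - (p - q), smul_sub_mem_of_zG_lt hKconv hKcone he hlt, by beta_reduce; abel⟩

lemma subset_sub_of_Ztwo_nonpos [TopologicalSpace Y] [IsTopologicalAddGroup Y]
    [ContinuousSMul ℝ Y] (hKconv : Convex ℝ K) (hKcone : ∀ c : ℝ, 0 ≤ c → ∀ x ∈ K, c • x ∈ K)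
    {e : Y} (he : e ∈ K) {P Q : Set Y} (hQKcl : IsClosed (Q - K)) (hZ : Ztwo e K P Q ≤ 0) :
    P ⊆ Q - K := by
  intro p hp
  have hlim : Tendsto (fun ε : ℝ => p - ε • e) (𝓝[>] 0) (𝓝 p) := by
    have hsmul : Tendsto (fun ε : ℝ => ε • e) (𝓝 0) (𝓝 ((0 : ℝ) • e)) :=
      tendsto_id.smul_const e
    simpa using (hsmul.const_sub p).mono_left nhdsWithin_le_nhds
  exact hQKcl.mem_of_tendsto hlim <| eventually_mem_nhdsWithin.mono fun ε hε =>
    sub_smul_mem_sub_of_Ztwo_nonpos hKconv hKcone he hZ hp hε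

end

theorem stmt_9_general {Y : Type*} [AddCommGroup Y] [Module ℝ Y] [TopologicalSpace Y]
    [IsTopologicalAddGroup Y] [ContinuousSMul ℝ Y]
    (K : Set Y) (hKconv : Convex ℝ K)
    (hKcone : ∀ (c : ℝ), 0 ≤ c → ∀ x ∈ K, c • x ∈ K)
    (hKnontriv : ∃ e, e ∈ K \ {0})
    (P Q : Set Y) (hQKcl : IsClosed (Q - K)) :
    (P ⊆ Q - K ↔ ∃ e ∈ K \ {0}, Ztwo e K P Q ≤ 0) ∧
    (P ⊆ Q - K ↔ ∀ e ∈ K \ {0}, Ztwo e K P Q ≤ 0) := by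
  have hback {e : Y} (he : e ∈ K \ {0}) : Ztwo e K P Q ≤ 0 → P ⊆ Q - K :=
    subset_sub_of_Ztwo_nonpos hKconv hKcone he.1 hQKcl
  obtain ⟨e₀, he₀⟩ := hKnontriv
  exact ⟨⟨fun hsub => ⟨e₀, he₀, Ztwo_nonpos_of_subset_sub hsub⟩, fun ⟨_, he, hZ⟩ => hback he hZ⟩,
    ⟨fun hsub _ _ => Ztwo_nonpos_of_subset_sub hsub, fun h => hback he₀ (h e₀ he₀)⟩⟩

/-- characterization of the u-type set order relation via ℤ₂, without
    any attainment assumption, assuming Q − K closed. -/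
theorem stmt_9 {Y : Type*} [AddCommGroup Y] [Module ℝ Y] [TopologicalSpace Y]
    [IsTopologicalAddGroup Y] [ContinuousSMul ℝ Y]
    (K : Set Y) (hKne : K.Nonempty) (hKcl : IsClosed K) (hKconv : Convex ℝ K)
    (hKcone : ∀ (c : ℝ), 0 ≤ c → ∀ x ∈ K, c • x ∈ K) (hKproper : K ≠ univ)
    (hKnontriv : ∃ e, e ∈ K \ {0})
    (P Q : Set Y) (hPne : P.Nonempty) (hQne : Q.Nonempty) (hQKcl : IsClosed (Q - K)) :
    (P ⊆ Q - K ↔ ∃ e ∈ K \ {0}, Ztwo e K P Q ≤ 0) ∧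
    (P ⊆ Q - K ↔ ∀ e ∈ K \ {0}, Ztwo e K P Q ≤ 0) :=
  stmt_9_general K hKconv hKcone hKnontriv P Q hQKcl
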